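/- There are exactly 13 equivalence classes of binary 3×16 matrices A = (A_1, A_2) such that A_1, A_2 are 3-bit Gray codes, the last column of A_1 equals the first column of A_2, and the multiset of row transition counts of A is {5,5,4}. -/

import Mathlib

/-!
Complementing rows makes the first column of an admissible matrix zero. A binary matrix whose
consecutive columns differ in exactly one bit is the walk in the cube `{0,1}^3` given by its first
column and its sequence of directions (the row that changes at each step). So a normalised
admissible matrix is a pair of direction sequences `d, e : Fin 7 → Fin 3` with Hamiltonian walks,
and the transition count of row `r` is the number of occurrences of `r` in `d` and `e`.
Row permutations act on such pairs by relabelling the directions. A Hamiltonian walk never takes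
the same direction twice in a row, so `d` can be relabelled to start with `0, 1`; only three
Hamiltonian sequences start this way, and `e` is a relabelling of one of them. A finite check
leaves thirteen pairs with counts `{5,5,4}`, and no two of them are related, since a relabelling
that keeps `d` starting with `0, 1` is the identity.
-/

/-- A 3-bit Gray code: a `3 × 8` binary matrix whose columns list all vectors of
`{0,1}^3`, with consecutive columns differing in exactly one bit. -/
def IsGrayCode3 (M : Fin 3 → Fin 8 → Bool) : Prop :=
  Function.Bijective (fun s : Fin 8 => fun r : Fin 3 => M r s) ∧
  ∀ s : Fin 7,
    (Finset.univ.filter fun r : Fin 3 => M r s.castSucc ≠ M r s.succ).card = 1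

/-- The `i`-th `3 × 8` block (`i = 0, 1`) of a `3 × 16` binary matrix. -/
def block3 (A : Fin 3 → Fin 16 → Bool) (i : Fin 2) : Fin 3 → Fin 8 → Bool :=
  fun r s => A r ⟨8 * i.val + s.val, by have := i.isLt; have := s.isLt; omega⟩

/-- The transition count of row `r` of a `3 × 16` matrix: the number of pairs of
consecutive columns at which the row entries differ (no wrap-around). -/
def rowTrans16 (A : Fin 3 → Fin 16 → Bool) (r : Fin 3) : ℕ :=
  (Finset.univ.filter fun p : Fin 16 × Fin 16 =>
    (p.2 : ℕ) = (p.1 : ℕ) + 1 ∧ A r p.1 ≠ A r p.2).card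

/-- The admissible matrices `A = (A₁, A₂)`: both blocks are 3-bit Gray codes, the
last column of `A₁` equals the first column of `A₂`, and the multiset of row
transition counts is `{5,5,4}`. -/
def IsAdmissible (A : Fin 3 → Fin 16 → Bool) : Prop :=
  (∀ i : Fin 2, IsGrayCode3 (block3 A i)) ∧
  (∀ r : Fin 3, A r 7 = A r 8) ∧
  Multiset.map (rowTrans16 A) Finset.univ.val = ({5, 5, 4} : Multiset ℕ)

/-- Equivalence: row permutations and/or complementing all bits in some rows. -/
def MatEquiv (A B : Fin 3 → Fin 16 → Bool) : Prop :=
  ∃ (π : Equiv.Perm (Fin 3)) (ε : Fin 3 → Bool),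
    ∀ r s, B r s = xor (ε r) (A (π r) s)

open Finset Function

section Walk

variable {m n : ℕ}

/-- Walks are stored column by column; `swap` turns them into the row-major matrices of
`IsGrayCode3`. -/
def walk (v : Fin n → Bool) (d : Fin m → Fin n) : Fin (m + 1) → Fin n → Bool :=
  Fin.induction v fun i c r => xor (c r) (decide (r = d i))

variable (v : Fin n → Bool) (d : Fin m → Fin n)

@[simp] lemma walk_zero : walk v d 0 = v := rfl

@[simp] lemma walk_succ (i : Fin m) (r : Fin n) :
    walk v d i.succ r = xor (walk v d i.castSucc r) (decide (r = d i)) := by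
  simp [walk, Fin.induction_succ]

lemma walk_castSucc_ne_succ_iff (i : Fin m) (r : Fin n) :
    walk v d i.castSucc r ≠ walk v d i.succ r ↔ r = d i := by
  rw [walk_succ]
  by_cases h : r = d i <;> cases walk v d i.castSucc r <;> simp [h]

lemma walk_apply_eq_xor (s : Fin (m + 1)) (r : Fin n) :
    walk v d s r = xor (v r) (walk (fun _ => false) d s r) := by
  induction s using Fin.induction with
  | zero => simp
  | succ i ih => simp [ih]

lemma injective_walk_iff : (walk v d).Injective ↔ (walk (fun _ => false) d).Injective := by
  have h : ∀ s, walk v d s = fun r => xor (v r) (walk (fun _ => false) d s r) :=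
    fun s => funext (walk_apply_eq_xor v d s)
  simp only [Injective, h, funext_iff, Bool.xor_right_inj]

lemma walk_comp_perm (π : Equiv.Perm (Fin n)) (s : Fin (m + 1)) :
    walk (v ∘ π) (π.symm ∘ d) s = walk v d s ∘ π := by
  induction s using Fin.induction with
  | zero => rfl
  | succ i ih =>
    funext r
    simp [ih, Equiv.eq_symm_apply]

variable {v d} in
lemma eq_of_walk_eq {w : Fin n → Bool} {e : Fin m → Fin n} (h : walk v d = walk w e) :
    d = e := by
  funext i
  have := walk_castSucc_ne_succ_iff w e i (d i)
  rw [← h, walk_castSucc_ne_succ_iff] at this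
  exact this.1 rfl

variable {v} in
lemma castSucc_ne_succ_of_injective_walk {d : Fin (m + 1) → Fin n}
    (hd : (walk v d).Injective) (i : Fin m) : d i.castSucc ≠ d i.succ := by
  intro h
  have : walk v d i.castSucc.castSucc = walk v d i.succ.succ := by
    funext r
    rw [walk_succ, ← Fin.succ_castSucc, walk_succ, h]
    cases walk v d i.castSucc.castSucc r <;> simp
  have := congrArg Fin.val (hd this)
  simp at this
  omega

end Walk

lemma exists_eq_walk {m n : ℕ} (M : Fin (m + 1) → Fin n → Bool)
    (hM : ∀ i : Fin m, #{r | M i.castSucc r ≠ M i.succ r} = 1) : ∃ d, M = walk (M 0) d := by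
  choose d hd using fun i => card_eq_one.1 (hM i)
  refine ⟨d, funext fun s => ?_⟩
  induction s using Fin.induction with
  | zero => rfl
  | succ i ih =>
    funext r
    have hr : M i.castSucc r ≠ M i.succ r ↔ r = d i := by
      simpa using Finset.ext_iff.1 (hd i) r
    rw [walk_succ, ← ih]
    generalize M i.castSucc r = a, M i.succ r = b at hr ⊢
    by_cases h : r = d i <;> cases a <;> cases b <;> simp_all

section Changes

variable {m k : ℕ} {α : Type*} [DecidableEq α]

def changes (u : Fin (m + 1) → α) : ℕ :=
  #{i : Fin m | u i.castSucc ≠ u i.succ}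

lemma changes_eq_sum (u : Fin (m + 1) → α) :
    changes u = ∑ i : Fin m, if u i.castSucc ≠ u i.succ then 1 else 0 := by
  simp [changes, card_filter]

lemma changes_append (u : Fin (m + 1) → α) (w : Fin (k + 1) → α) (h : u (Fin.last m) = w 0) :
    changes (Fin.append u w : Fin (m + 1 + (k + 1)) → α) = changes u + changes w := by
  rw [changes_eq_sum]
  show (∑ i : Fin (m + 1 + k), _) = _
  rw [Fin.sum_univ_add, Fin.sum_univ_castSucc, changes_eq_sum, changes_eq_sum]
  have hsucc (i : Fin m) : (Fin.castAdd k i.castSucc).succ = Fin.castAdd (k + 1) i.succ := rfl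
  have hjunction : (Fin.castAdd k (Fin.last m)).succ = Fin.natAdd (m + 1) (0 : Fin (k + 1)) :=
    rfl
  simp only [Fin.castSucc_castAdd, Fin.castSucc_natAdd, Fin.succ_natAdd, hsucc, hjunction,
    Fin.append_left, Fin.append_right, h, ne_eq, not_true_eq_false, if_false, add_zero]

lemma changes_walk {n : ℕ} (v : Fin n → Bool) (d : Fin m → Fin n) (r : Fin n) :
    changes (fun s => walk v d s r) = #{i | d i = r} := by
  simp only [changes, walk_castSucc_ne_succ_iff, eq_comm]

end Changes

lemma rowTrans16_eq_changes (A : Fin 3 → Fin 16 → Bool) (r : Fin 3) :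
    rowTrans16 A r = changes (A r) := by
  refine (card_nbij (fun i : Fin 15 => (i.castSucc, i.succ)) (fun i hi => ?_) ?_ ?_).symm
  · simpa using hi
  · intro i _ j _ h
    exact Fin.castSucc_injective _ (congrArg Prod.fst h)
  · rintro ⟨a, b⟩ hab
    simp only [coe_filter, mem_univ, true_and, Set.mem_ofPred_eq] at hab
    obtain ⟨hb, hne⟩ := hab
    have hsucc : (⟨a, by omega⟩ : Fin 15).succ = b := Fin.ext hb.symm
    exact ⟨⟨a, by omega⟩, by simpa [hsucc] using hne, Prod.ext rfl hsucc⟩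

lemma rowTrans16_xor_comp (A : Fin 3 → Fin 16 → Bool) (π : Equiv.Perm (Fin 3))
    (ε : Fin 3 → Bool) (r : Fin 3) :
    rowTrans16 (fun r s => xor (ε r) (A (π r) s)) r = rowTrans16 A (π r) := by
  simp only [rowTrans16, ne_eq, Bool.xor_right_inj]

lemma block3_append_zero (M N : Fin 3 → Fin 8 → Bool) :
    block3 (fun r => Fin.append (M r) (N r)) 0 = M := by
  funext r s
  rw [← Fin.append_left (M r) (N r) s, block3]
  congr 1
  simp [Fin.ext_iff]

lemma block3_append_one (M N : Fin 3 → Fin 8 → Bool) :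
    block3 (fun r => Fin.append (M r) (N r)) 1 = N := by
  funext r s
  exact Fin.append_right (M r) (N r) s

lemma append_block3 (A : Fin 3 → Fin 16 → Bool) :
    (fun r => Fin.append (block3 A 0 r) (block3 A 1 r)) = A := by
  funext r s
  refine Fin.addCases (fun i => ?_) (fun j => ?_) s
  · rw [Fin.append_left, block3]
    congr 1
    simp [Fin.ext_iff]
  · exact Fin.append_right _ _ j

lemma isGrayCode3_swap_walk_iff (v : Fin 3 → Bool) (d : Fin 7 → Fin 3) :
    IsGrayCode3 (swap (walk v d)) ↔ (walk v d).Injective := by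
  have hstep (s : Fin 7) :
      #{r | swap (walk v d) r s.castSucc ≠ swap (walk v d) r s.succ} = 1 := by
    simp only [swap, walk_castSucc_ne_succ_iff, filter_eq', mem_univ, if_true, card_singleton]
  simp only [IsGrayCode3, hstep, implies_true, and_true]
  exact (Fintype.bijective_iff_injective_and_card _).trans (by simp)

lemma IsGrayCode3.exists_eq_walk {M : Fin 3 → Fin 8 → Bool} (hM : IsGrayCode3 M) :
    ∃ d, swap M = walk (fun r => M r 0) d :=
  _root_.exists_eq_walk (swap M) hM.2

lemma IsGrayCode3.xor_comp {M : Fin 3 → Fin 8 → Bool} (hM : IsGrayCode3 M)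
    (π : Equiv.Perm (Fin 3)) (ε : Fin 3 → Bool) :
    IsGrayCode3 (fun r s => xor (ε r) (M (π r) s)) := by
  obtain ⟨hbij, hstep⟩ := hM
  have hT : Bijective fun (v : Fin 3 → Bool) r => xor (ε r) (v (π r)) :=
    Finite.injective_iff_bijective.1 fun v w h => funext fun r => by
      simpa using congrFun h (π.symm r)
  refine ⟨hT.comp hbij, fun s => ?_⟩
  rw [← hstep s]
  exact card_equiv π (by simp)

namespace MatEquiv

variable {A B C : Fin 3 → Fin 16 → Bool}

lemma symm (h : MatEquiv A B) : MatEquiv B A := by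
  obtain ⟨π, ε, h⟩ := h
  refine ⟨π.symm, fun r => ε (π.symm r), fun r s => ?_⟩
  rw [h, Equiv.apply_symm_apply, ← Bool.xor_assoc, Bool.xor_self, Bool.false_xor]

lemma trans (h₁ : MatEquiv A B) (h₂ : MatEquiv B C) : MatEquiv A C := by
  obtain ⟨π, ε, h₁⟩ := h₁
  obtain ⟨σ, δ, h₂⟩ := h₂
  refine ⟨σ.trans π, fun r => xor (δ r) (ε (σ r)), fun r s => ?_⟩
  rw [h₂, h₁, Bool.xor_assoc]
  rfl

lemma isAdmissible (h : MatEquiv A B) (hA : IsAdmissible A) : IsAdmissible B := by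
  obtain ⟨π, ε, hB⟩ := h
  obtain rfl : B = fun r s => xor (ε r) (A (π r) s) := funext₂ hB
  obtain ⟨hgray, hjunc, hcounts⟩ := hA
  refine ⟨fun i => (hgray i).xor_comp π ε, fun r => by simp [hjunc], ?_⟩
  rw [← hcounts, funext (rowTrans16_xor_comp A π ε)]
  show Multiset.map (rowTrans16 A ∘ π) _ = _
  rw [← Multiset.map_map, Multiset.map_univ_val_equiv]

lemma eq_comp_of_apply_zero (h : MatEquiv A B) (hA : ∀ r, A r 0 = false)
    (hB : ∀ r, B r 0 = false) : ∃ π : Equiv.Perm (Fin 3), B = fun r => A (π r) := by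
  obtain ⟨π, ε, h⟩ := h
  have hε : ∀ r, ε r = false := fun r => by simpa [hA, hB] using (h r 0).symm
  exact ⟨π, funext₂ fun r s => by simp [h, hε]⟩

end MatEquiv

lemma matEquiv_xor_apply_zero (A : Fin 3 → Fin 16 → Bool) :
    MatEquiv A fun r s => xor (A r 0) (A r s) :=
  ⟨1, fun r => A r 0, fun _ _ => rfl⟩

def grayMatrix (d e : Fin 7 → Fin 3) : Fin 3 → Fin 16 → Bool :=
  fun r => Fin.append (swap (walk (fun _ => false) d) r)
    (swap (walk (walk (fun _ => false) d (Fin.last 7)) e) r)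

def dirCounts (d e : Fin 7 → Fin 3) : Multiset ℕ :=
  Multiset.map (fun r => #{i | d i = r} + #{i | e i = r}) univ.val

section GrayMatrix

variable (d e : Fin 7 → Fin 3)

lemma grayMatrix_apply_zero (r : Fin 3) : grayMatrix d e r 0 = false := rfl

lemma block3_grayMatrix_zero : block3 (grayMatrix d e) 0 = swap (walk (fun _ => false) d) :=
  block3_append_zero _ _

lemma block3_grayMatrix_one :
    block3 (grayMatrix d e) 1 = swap (walk (walk (fun _ => false) d (Fin.last 7)) e) :=
  block3_append_one _ _

lemma rowTrans16_grayMatrix :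
    rowTrans16 (grayMatrix d e) = fun r => #{i | d i = r} + #{i | e i = r} := by
  funext r
  rw [rowTrans16_eq_changes, ← changes_walk (fun _ => false) d r,
    ← changes_walk (walk (fun _ => false) d (Fin.last 7)) e r]
  exact changes_append _ _ rfl

lemma isAdmissible_grayMatrix_iff :
    IsAdmissible (grayMatrix d e) ↔ (walk (fun _ => false) d).Injective ∧
      (walk (fun _ => false) e).Injective ∧ dirCounts d e = {5, 5, 4} := by
  simp only [IsAdmissible, Fin.forall_fin_two, block3_grayMatrix_zero, block3_grayMatrix_one,
    isGrayCode3_swap_walk_iff, injective_walk_iff _ e, rowTrans16_grayMatrix]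
  exact ⟨fun ⟨h, _, hc⟩ => ⟨h.1, h.2, hc⟩, fun ⟨h₁, h₂, hc⟩ => ⟨⟨h₁, h₂⟩, fun _ => rfl, hc⟩⟩

lemma grayMatrix_comp_perm (π : Equiv.Perm (Fin 3)) :
    grayMatrix (π.symm ∘ d) (π.symm ∘ e) = fun r => grayMatrix d e (π r) := by
  have h₁ : walk (fun _ => false) (π.symm ∘ d) = fun s => walk (fun _ => false) d s ∘ π :=
    funext (walk_comp_perm (fun _ => false) d π)
  have h₂ : walk (walk (fun _ => false) d (Fin.last 7) ∘ π) (π.symm ∘ e) =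
      fun s => walk (walk (fun _ => false) d (Fin.last 7)) e s ∘ π :=
    funext (walk_comp_perm _ e π)
  unfold grayMatrix
  simp only [h₁, h₂]
  rfl

lemma matEquiv_grayMatrix_comp_perm (π : Equiv.Perm (Fin 3)) :
    MatEquiv (grayMatrix d e) (grayMatrix (π.symm ∘ d) (π.symm ∘ e)) :=
  ⟨π, fun _ => false, fun r s => by simp [grayMatrix_comp_perm]⟩

end GrayMatrix

lemma grayMatrix_injective2 : Injective2 grayMatrix := by
  intro d d' e e' h
  have h₀ := congrArg (swap <| block3 · 0) h
  have h₁ := congrArg (swap <| block3 · 1) h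
  simp only [block3_grayMatrix_zero, block3_grayMatrix_one] at h₀ h₁
  exact ⟨eq_of_walk_eq h₀, eq_of_walk_eq h₁⟩

lemma exists_eq_grayMatrix {A : Fin 3 → Fin 16 → Bool} (hA : IsAdmissible A)
    (h0 : ∀ r, A r 0 = false) : ∃ d e, A = grayMatrix d e := by
  obtain ⟨hgray, hjunc, -⟩ := hA
  obtain ⟨d, hd⟩ := (hgray 0).exists_eq_walk
  obtain ⟨e, he⟩ := (hgray 1).exists_eq_walk
  have hstart₀ : (fun r => block3 A 0 r 0) = fun _ => false := funext h0
  have hstart₁ : (fun r => block3 A 1 r 0) = walk (fun _ => false) d (Fin.last 7) := by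
    rw [← hstart₀, ← hd]
    exact funext fun r => (hjunc r).symm
  rw [hstart₀] at hd
  rw [hstart₁] at he
  refine ⟨d, e, ?_⟩
  rw [← append_block3 A]
  exact congrArg₂ (fun M N r => Fin.append (M r) (N r)) (congrArg swap hd) (congrArg swap he)

def canonicalGrayDirs : Finset (Fin 7 → Fin 3) :=
  {![0, 1, 0, 2, 0, 1, 0], ![0, 1, 0, 2, 1, 0, 1], ![0, 1, 2, 1, 0, 1, 2]}

set_option maxRecDepth 100000 in
lemma mem_canonicalGrayDirs_of_injective_walk {d : Fin 7 → Fin 3} (h0 : d 0 = 0) (h1 : d 1 = 1)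
    (hd : (walk (fun _ => false) d).Injective) : d ∈ canonicalGrayDirs := by
  have hsearch : ∀ a b c e f : Fin 3, (walk (fun _ => false) ![0, 1, a, b, c, e, f]).Injective →
      ![0, 1, a, b, c, e, f] ∈ canonicalGrayDirs := by
    decide +kernel
  have hd' : d = ![0, 1, d 2, d 3, d 4, d 5, d 6] := by
    funext i
    fin_cases i <;> simp [h0, h1]
  rw [hd'] at hd ⊢
  exact hsearch _ _ _ _ _ hd

lemma apply_zero_one_of_mem_canonicalGrayDirs :
    ∀ d ∈ canonicalGrayDirs, d 0 = 0 ∧ d 1 = 1 := by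
  simp [canonicalGrayDirs]

lemma exists_perm_comp_mem_canonicalGrayDirs {d : Fin 7 → Fin 3}
    (hd : (walk (fun _ => false) d).Injective) :
    ∃ π : Equiv.Perm (Fin 3), π.symm ∘ d ∈ canonicalGrayDirs := by
  have hne : d 0 ≠ d 1 := castSucc_ne_succ_of_injective_walk hd 0
  obtain ⟨π, h0, h1⟩ : ∃ π : Equiv.Perm (Fin 3), π 0 = d 0 ∧ π 1 = d 1 := by
    generalize d 0 = a, d 1 = b at hne
    revert a b
    decide
  refine ⟨π, mem_canonicalGrayDirs_of_injective_walk (by simp [← h0]) (by simp [← h1])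
    fun s t hst => hd ?_⟩
  have hwalk : ∀ s, walk (fun _ => false) (π.symm ∘ d) s = walk (fun _ => false) d s ∘ π :=
    walk_comp_perm (fun _ => false) d π
  rw [hwalk, hwalk] at hst
  exact π.surjective.injective_comp_right hst

def grayReps : Finset ((Fin 7 → Fin 3) × (Fin 7 → Fin 3)) :=
  {(![0, 1, 0, 2, 0, 1, 0], ![1, 2, 1, 0, 2, 1, 2]),
   (![0, 1, 0, 2, 0, 1, 0], ![2, 1, 2, 0, 1, 2, 1]),
   (![0, 1, 0, 2, 0, 1, 0], ![2, 1, 2, 0, 2, 1, 2]),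
   (![0, 1, 0, 2, 1, 0, 1], ![0, 2, 1, 2, 0, 2, 1]),
   (![0, 1, 0, 2, 1, 0, 1], ![1, 2, 0, 2, 1, 2, 0]),
   (![0, 1, 0, 2, 1, 0, 1], ![2, 0, 2, 1, 2, 0, 2]),
   (![0, 1, 0, 2, 1, 0, 1], ![2, 1, 2, 0, 2, 1, 2]),
   (![0, 1, 2, 1, 0, 1, 2], ![0, 2, 0, 1, 2, 0, 2]),
   (![0, 1, 2, 1, 0, 1, 2], ![0, 2, 1, 2, 0, 2, 1]),
   (![0, 1, 2, 1, 0, 1, 2], ![1, 0, 2, 0, 1, 0, 2]),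
   (![0, 1, 2, 1, 0, 1, 2], ![1, 2, 0, 2, 1, 2, 0]),
   (![0, 1, 2, 1, 0, 1, 2], ![2, 0, 1, 0, 2, 0, 1]),
   (![0, 1, 2, 1, 0, 1, 2], ![2, 0, 2, 1, 0, 2, 0])}

lemma card_grayReps : grayReps.card = 13 := by
  decide +kernel

-- The quantifiers over finsets are unfolded first: `decide` would otherwise enumerate the
-- whole type of pairs of sequences.
lemma fst_mem_canonicalGrayDirs_of_mem_grayReps :
    ∀ p ∈ grayReps, p.1 ∈ canonicalGrayDirs := by
  simp only [grayReps, mem_insert, mem_singleton, forall_eq_or_imp, forall_eq]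
  and_intros <;> decide +kernel

lemma isAdmissible_grayMatrix_of_mem_grayReps :
    ∀ p ∈ grayReps, IsAdmissible (grayMatrix p.1 p.2) := by
  simp only [grayReps, mem_insert, mem_singleton, forall_eq_or_imp, forall_eq,
    isAdmissible_grayMatrix_iff]
  and_intros <;> decide +kernel

lemma mem_grayReps_of_dirCounts_eq : ∀ g ∈ canonicalGrayDirs, ∀ c ∈ canonicalGrayDirs,
    ∀ σ : Equiv.Perm (Fin 3), dirCounts g (σ ∘ c) = {5, 5, 4} → (g, σ ∘ c) ∈ grayReps := by
  simp only [canonicalGrayDirs, mem_insert, mem_singleton, forall_eq_or_imp, forall_eq]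
  and_intros <;> decide +kernel

lemma exists_mem_grayReps_matEquiv {A : Fin 3 → Fin 16 → Bool} (hA : IsAdmissible A) :
    ∃ p ∈ grayReps, MatEquiv A (grayMatrix p.1 p.2) := by
  have hA₀ := matEquiv_xor_apply_zero A
  obtain ⟨d, e, hde⟩ := exists_eq_grayMatrix (hA₀.isAdmissible hA) fun r => Bool.xor_self _
  rw [hde] at hA₀
  obtain ⟨hd, -, -⟩ := (isAdmissible_grayMatrix_iff d e).1 (hA₀.isAdmissible hA)
  obtain ⟨π, hπ⟩ := exists_perm_comp_mem_canonicalGrayDirs hd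
  have hA₁ := hA₀.trans (matEquiv_grayMatrix_comp_perm d e π)
  obtain ⟨-, he, hcounts⟩ := (isAdmissible_grayMatrix_iff _ _).1 (hA₁.isAdmissible hA)
  obtain ⟨σ, hσ⟩ := exists_perm_comp_mem_canonicalGrayDirs he
  have he' : π.symm ∘ e = σ ∘ (σ.symm ∘ π.symm ∘ e) := by
    funext i
    simp
  rw [he'] at hcounts hA₁
  exact ⟨_, mem_grayReps_of_dirCounts_eq _ hπ _ hσ σ hcounts, hA₁⟩

lemma eq_of_mem_grayReps_of_matEquiv {p q : (Fin 7 → Fin 3) × (Fin 7 → Fin 3)}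
    (hp : p ∈ grayReps) (hq : q ∈ grayReps)
    (h : MatEquiv (grayMatrix p.1 p.2) (grayMatrix q.1 q.2)) : p = q := by
  obtain ⟨π, hπ⟩ :=
    h.eq_comp_of_apply_zero (grayMatrix_apply_zero _ _) (grayMatrix_apply_zero _ _)
  rw [← grayMatrix_comp_perm] at hπ
  obtain ⟨h₁, h₂⟩ := grayMatrix_injective2 hπ
  obtain ⟨hp₀, hp₁⟩ := apply_zero_one_of_mem_canonicalGrayDirs _
    (fst_mem_canonicalGrayDirs_of_mem_grayReps p hp)
  obtain ⟨hq₀, hq₁⟩ := apply_zero_one_of_mem_canonicalGrayDirs _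
    (fst_mem_canonicalGrayDirs_of_mem_grayReps q hq)
  have hπ₁ : π.symm = 1 := by
    have h0 : π.symm 0 = 0 := by simpa [hp₀, hq₀] using (congrFun h₁ 0).symm
    have h1 : π.symm 1 = 1 := by simpa [hp₁, hq₁] using (congrFun h₁ 1).symm
    revert h0 h1
    generalize π.symm = σ
    revert σ
    decide
  simp only [hπ₁, Equiv.Perm.coe_one, id_comp] at h₁ h₂
  exact Prod.ext h₁.symm h₂.symm

/-- There are exactly `13` equivalence classes of `3 × 16` binary matrices
`A = (A₁, A₂)` with `A₁, A₂` 3-bit Gray codes, the last column of `A₁` equal to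
the first column of `A₂`, and row transition-count multiset `{5,5,4}`. -/
theorem thirteen_classes :
    ∃ R : Finset (Fin 3 → Fin 16 → Bool),
      R.card = 13 ∧
      (∀ A ∈ R, IsAdmissible A) ∧
      ∀ A : Fin 3 → Fin 16 → Bool, IsAdmissible A →
        ∃! B, B ∈ R ∧ MatEquiv A B := by
  refine ⟨grayReps.image (uncurry grayMatrix),
    by rw [card_image_of_injective _ grayMatrix_injective2.uncurry, card_grayReps],
    forall_mem_image.2 fun p hp => isAdmissible_grayMatrix_of_mem_grayReps p hp,
    fun A hA => ?_⟩
  obtain ⟨p, hp, hAp⟩ := exists_mem_grayReps_matEquiv hA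
  refine ⟨grayMatrix p.1 p.2, ⟨mem_image_of_mem _ hp, hAp⟩, ?_⟩
  rintro _ ⟨hB, hAB⟩
  obtain ⟨q, hq, rfl⟩ := mem_image.1 hB
  rw [eq_of_mem_grayReps_of_matEquiv hp hq (hAp.symm.trans hAB)]
  rfl
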